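/- arXiv:1711.10906 — 2 statements merged into one kernel-verified Lean document; each statement's English description precedes it below -/
import Mathlib

section
/- A cubic graph G is 2-matching-colorable if and only if G admits a (1,1,2,2)-packing edge-coloring. -/
open SimpleGraph

variable {V : Type*}

/-- A graph is cubic if every vertex has exactly 3 neighbors. -/
def IsCubicGraph (G : SimpleGraph V) : Prop := ∀ v, (G.neighborSet v).ncard = 3

/-- A 2-factor: a spanning subgraph in which every vertex has exactly 2 neighbors. -/
def IsTwoFactor {G : SimpleGraph V} (F : G.Subgraph) : Prop :=
  F.IsSpanning ∧ ∀ v, (F.neighborSet v).ncard = 2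

/-- An `S`-packing edge-coloring of `G`, where the sequence `S` is given as a list `L`
of natural numbers: a partition (given by a coloring function) of the edges into
`L.length` classes, where two distinct edges in class `i` are at distance at least
`L.get i + 1` in the line graph of `G`. -/
def HasPackingEdgeColoring (G : SimpleGraph V) (L : List ℕ) : Prop :=
  ∃ c : G.edgeSet → Fin L.length,
    ∀ e f : G.edgeSet, e ≠ f → c e = c f →
      (L.get (c e) : ℕ∞) + 1 ≤ G.lineGraph.edist e f

/-- The graph `G^k[A]`: vertices are the elements of `A` (a set of edges of `G`), two of them
being adjacent iff the corresponding edges are distinct and at distance at most `k` in `G`. -/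
noncomputable def distPowerGraph (G : SimpleGraph V) (k : ℕ) (A : Set (Sym2 V)) :
    SimpleGraph A where
  Adj e f := e ≠ f ∧ ∃ (he : (e : Sym2 V) ∈ G.edgeSet) (hf : (f : Sym2 V) ∈ G.edgeSet),
      G.lineGraph.edist ⟨e, he⟩ ⟨f, hf⟩ ≤ k
  symm := by
    constructor
    rintro e f ⟨hne, he, hf, hd⟩
    exact ⟨hne.symm, hf, he, by rwa [SimpleGraph.edist_comm]⟩
  loopless := by constructor; rintro e ⟨hne, -⟩; exact hne rfl

/-- The set of odd cycles of a 2-factor `F`, viewed as the connected components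
of its spanning coercion with an odd number of vertices. -/
def oddCycles {G : SimpleGraph V} (F : G.Subgraph) :
    Set F.spanningCoe.ConnectedComponent :=
  {c | Odd c.supp.ncard}

/-- The set of edges of a 2-factor `F` lying on the cycle (connected component) `c`. -/
def cycleEdges {G : SimpleGraph V} (F : G.Subgraph)
    (c : F.spanningCoe.ConnectedComponent) : Set (Sym2 V) :=
  {e ∈ F.edgeSet | ∀ v ∈ e, v ∈ c.supp}

/-- A set `A` of edges of a 2-factor `F` is of type I if it contains exactly one edge
per odd cycle of `F` and no edge of any even cycle of `F`. -/
def IsTypeI {G : SimpleGraph V} (F : G.Subgraph) (A : Set (Sym2 V)) : Prop :=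
  A ⊆ F.edgeSet ∧ ∀ c : F.spanningCoe.ConnectedComponent,
    (Odd c.supp.ncard → (A ∩ cycleEdges F c).ncard = 1) ∧
    (¬ Odd c.supp.ncard → A ∩ cycleEdges F c = ∅)

/-- A set `B` of edges of a 2-factor `F` is of type II if no two of its edges are adjacent
in `G` and it contains exactly `⌊n/2⌋` edges of every cycle of `F` of length `n`. -/
def IsTypeII {G : SimpleGraph V} (F : G.Subgraph) (B : Set (Sym2 V)) : Prop :=
  B ⊆ F.edgeSet ∧
  (∀ e ∈ B, ∀ f ∈ B, e ≠ f → ∀ v : V, ¬(v ∈ e ∧ v ∈ f)) ∧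
  ∀ c : F.spanningCoe.ConnectedComponent,
    (B ∩ cycleEdges F c).ncard = c.supp.ncard / 2


/-- `G` is 2-matching-colorable: `V(G)` can be partitioned into two sets each of which
induces a subgraph of minimum and maximum degree 1. -/
def IsTwoMatchingColorable (G : SimpleGraph V) : Prop :=
  ∃ A1 A2 : Set V, A1 ∪ A2 = Set.univ ∧ Disjoint A1 A2 ∧
    (∀ v ∈ A1, {w ∈ A1 | G.Adj v w}.ncard = 1) ∧
    (∀ v ∈ A2, {w ∈ A2 | G.Adj v w}.ncard = 1)


private lemma enat_two_le' {x : ℕ∞} (h0 : x ≠ 0) (h1 : x ≠ 1) : 2 ≤ x := by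
  cases x with
  | top => exact le_top
  | coe n =>
    have h0' : n ≠ 0 := by simpa using h0
    have h1' : n ≠ 1 := by simpa using h1
    exact_mod_cast (by omega : 2 ≤ n)

private lemma enat_three_le' {x : ℕ∞} (h0 : x ≠ 0) (h1 : x ≠ 1) (h2 : x ≠ 2) : 3 ≤ x := by
  cases x with
  | top => exact le_top
  | coe n =>
    have h0' : n ≠ 0 := by simpa using h0
    have h1' : n ≠ 1 := by simpa using h1
    have h2' : n ≠ 2 := by exact_mod_cast h2
    exact_mod_cast (by omega : 3 ≤ n)

private lemma adj_or_of_edist_eq_two' {α : Type*} {H : SimpleGraph α} {u v : α}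
    (h : H.edist u v = 2) : ∃ w, H.Adj u w ∧ H.Adj w v := by
  have hne : H.edist u v ≠ ⊤ := by rw [h]; exact (by decide)
  obtain ⟨p, hp⟩ := SimpleGraph.exists_walk_of_edist_ne_top hne
  rw [h] at hp
  have hl : p.length = 2 := by exact_mod_cast hp
  match p, hl with
  | .cons h1 (.cons h2 .nil), _ => exact ⟨_, h1, h2⟩

private lemma two_le_edist_of_not_adj {α : Type*} {H : SimpleGraph α} {u v : α}
    (hne : u ≠ v) (h : ¬H.Adj u v) : 2 ≤ H.edist u v := by
  apply enat_two_le'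
  · rw [ne_eq, SimpleGraph.edist_eq_zero_iff]; exact hne
  · rw [ne_eq, SimpleGraph.edist_eq_one_iff_adj]; exact h

private lemma three_le_edist' {α : Type*} {H : SimpleGraph α} {u v : α}
    (hne : u ≠ v) (h : ¬H.Adj u v) (h2 : ∀ w, ¬(H.Adj u w ∧ H.Adj w v)) :
    3 ≤ H.edist u v := by
  apply enat_three_le'
  · rw [ne_eq, SimpleGraph.edist_eq_zero_iff]; exact hne
  · rw [ne_eq, SimpleGraph.edist_eq_one_iff_adj]; exact h
  · intro hd
    obtain ⟨w, hw1, hw2⟩ := adj_or_of_edist_eq_two' hd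
    exact h2 w ⟨hw1, hw2⟩

private lemma eq_of_ncard_one' {α : Type*} {S : Set α} {a b : α} (h : S.ncard = 1)
    (ha : a ∈ S) (hb : b ∈ S) : a = b := by
  obtain ⟨x, rfl⟩ := Set.ncard_eq_one.mp h
  simp only [Set.mem_singleton_iff] at ha hb
  rw [ha, hb]

private lemma not_three_in_two' {α : Type*} {S : Set α} {a b c : α} (h : S.ncard = 2)
    (hS : S.Finite) (ha : a ∈ S) (hb : b ∈ S) (hc : c ∈ S)
    (hab : a ≠ b) (hac : a ≠ c) (hbc : b ≠ c) : False := by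
  have hsub : ({a, b, c} : Set α) ⊆ S := by
    intro x hx
    rcases hx with rfl | rfl | rfl <;> assumption
  have h3 : ({a, b, c} : Set α).ncard = 3 := by
    rw [Set.ncard_insert_of_notMem (by simp [hab, hac]) (Set.toFinite _),
      Set.ncard_pair hbc]
  have := Set.ncard_le_ncard hsub hS
  omega

/-- two distinct edges with all endpoints in a part inducing a perfect matching are
at distance at least 3 in the line graph. -/
private lemma matching_far {G : SimpleGraph V} {S : Set V}
    (hS : ∀ v ∈ S, {w ∈ S | G.Adj v w}.ncard = 1) {e f : G.edgeSet} (hne : e ≠ f)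
    (hSe : ∀ x ∈ (e : Sym2 V), x ∈ S) (hSf : ∀ x ∈ (f : Sym2 V), x ∈ S) :
    3 ≤ G.lineGraph.edist e f := by
  have noshare : ∀ x, x ∈ (e : Sym2 V) → x ∈ (f : Sym2 V) → False := by
    intro x hxe hxf
    obtain ⟨y, hey⟩ := (Sym2.mem_iff_exists).mp hxe
    obtain ⟨z, hfz⟩ := (Sym2.mem_iff_exists).mp hxf
    have hxy : G.Adj x y := by have := e.2; rwa [hey, SimpleGraph.mem_edgeSet] at this
    have hxz : G.Adj x z := by have := f.2; rwa [hfz, SimpleGraph.mem_edgeSet] at this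
    have hyz : y ≠ z := by
      intro h
      apply hne
      apply Subtype.ext
      rw [hey, hfz, h]
    have hy : y ∈ S := hSe y (by rw [hey]; simp)
    have hz : z ∈ S := hSf z (by rw [hfz]; simp)
    have hx : x ∈ S := hSe x hxe
    exact hyz (eq_of_ncard_one' (hS x hx) ⟨hy, hxy⟩ ⟨hz, hxz⟩)
  apply three_le_edist'
  · exact hne
  · intro hadj
    obtain ⟨-, x, hxe, hxf⟩ := lineGraph_adj_iff_exists.mp hadj
    exact noshare x hxe hxf
  · rintro g ⟨hg1, hg2⟩
    obtain ⟨hne1, p, hpe, hpg⟩ := lineGraph_adj_iff_exists.mp hg1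
    obtain ⟨hne2, q, hqg, hqf⟩ := lineGraph_adj_iff_exists.mp hg2
    by_cases hpq : p = q
    · exact noshare p hpe (hpq ▸ hqf)
    · have hgval : (g : Sym2 V) = s(p, q) := (Sym2.mem_and_mem_iff hpq).mp ⟨hpg, hqg⟩
      have hadjpq : G.Adj p q := by have := g.2; rwa [hgval, SimpleGraph.mem_edgeSet] at this
      obtain ⟨y, hey⟩ := (Sym2.mem_iff_exists).mp hpe
      have hpy : G.Adj p y := by have := e.2; rwa [hey, SimpleGraph.mem_edgeSet] at this
      have hy : y ∈ S := hSe y (by rw [hey]; simp)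
      have hp : p ∈ S := hSe p hpe
      have hq : q ∈ S := hSf q hqf
      have hyq : y ≠ q := by
        intro h
        exact noshare q (by rw [hey, ← h]; simp) hqf
      exact hyq (eq_of_ncard_one' (hS p hp) ⟨hy, hpy⟩ ⟨hq, hadjpq⟩)

/-- Hall's theorem packaged: a bipartite-type situation where each side sees exactly 2
vertices across gives an injection realized by edges. -/
private lemma hall_cross {V : Type*} [Fintype V] {G : SimpleGraph V} {B C : Set V}
    (hBC : ∀ v ∈ B, {w ∈ C | G.Adj v w}.ncard = 2)
    (hCB : ∀ w ∈ C, {v ∈ B | G.Adj w v}.ncard = 2) :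
    ∃ f : B → V, Function.Injective f ∧ ∀ v : B, f v ∈ C ∧ G.Adj v (f v) := by
  classical
  set t : B → Finset V := fun v => (Set.toFinite {w ∈ C | G.Adj v.1 w}).toFinset with ht
  have htcard : ∀ v : B, (t v).card = 2 := by
    intro v
    rw [ht]
    rw [← Set.ncard_eq_toFinset_card]
    exact hBC v.1 v.2
  have hmemt : ∀ (v : B) (w : V), w ∈ t v ↔ w ∈ C ∧ G.Adj v.1 w := by
    intro v w
    rw [ht]
    simp [Set.Finite.mem_toFinset]
  have hall : ∀ s : Finset B, s.card ≤ (s.biUnion t).card := by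
    intro s
    have key : s.card * 2 ≤ (s.biUnion t).card * 2 := by
      apply Finset.card_mul_le_card_mul (fun a b => b ∈ t a)
      · intro a ha
        have : (s.biUnion t).bipartiteAbove (fun a b => b ∈ t a) a = t a := by
          ext w
          simp only [Finset.bipartiteAbove, Finset.mem_filter, Finset.mem_biUnion]
          exact ⟨fun h => h.2, fun h => ⟨⟨a, ha, h⟩, h⟩⟩
        rw [this, htcard]
      · intro b hb
        obtain ⟨a0, _, hb0⟩ := Finset.mem_biUnion.mp hb
        have hbC : b ∈ C := ((hmemt a0 b).mp hb0).1
        have hsub : ∀ a ∈ s.bipartiteBelow (fun a b => b ∈ t a) b,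
            (a : B).1 ∈ {v ∈ B | G.Adj b v} := by
          intro a ha
          rw [Finset.bipartiteBelow, Finset.mem_filter] at ha
          exact ⟨a.2, ((hmemt a b).mp ha.2).2.symm⟩
        calc (s.bipartiteBelow (fun a b => b ∈ t a) b).card
            ≤ ((Set.toFinite {v ∈ B | G.Adj b v}).toFinset).card := by
              apply Finset.card_le_card_of_injOn (fun a => (a : B).1)
              · intro a ha
                simp only [Finset.mem_coe, Set.Finite.mem_toFinset]
                exact hsub a ha
              · intro a _ a' _ h
                exact Subtype.ext h
          _ = 2 := by rw [← Set.ncard_eq_toFinset_card]; exact hCB b hbC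
    omega
  obtain ⟨f, hfinj, hf⟩ := (Finset.all_card_le_biUnion_card_iff_exists_injective t).mp hall
  refine ⟨f, hfinj, fun v => ?_⟩
  have := (hmemt v (f v)).mp (hf v)
  exact ⟨this.1, this.2⟩

private lemma fwd {V : Type*} [Fintype V] {G : SimpleGraph V} (hcubic : IsCubicGraph G)
    (h : IsTwoMatchingColorable G) : HasPackingEdgeColoring G [1, 1, 2, 2] := by
  classical
  obtain ⟨A1, A2, hunion, hdisj, h1, h2⟩ := h
  have hmem : ∀ v : V, v ∈ A1 ∨ v ∈ A2 := by
    intro v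
    have : v ∈ A1 ∪ A2 := by rw [hunion]; trivial
    exact this
  have hnot : ∀ v, v ∈ A1 → v ∈ A2 → False := fun v hv hv' =>
    Set.disjoint_left.mp hdisj hv hv'
  have crosscount : ∀ (B C : Set V), B ∪ C = Set.univ →
      (∀ v, v ∈ B → v ∈ C → False) →
      (∀ v ∈ B, {w ∈ B | G.Adj v w}.ncard = 1) →
      ∀ v ∈ B, {w ∈ C | G.Adj v w}.ncard = 2 := by
    intro B C hBC hBCd hB v hv
    have hsplit : G.neighborSet v = {w ∈ B | G.Adj v w} ∪ {w ∈ C | G.Adj v w} := by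
      ext w
      simp only [SimpleGraph.mem_neighborSet, Set.mem_union, Set.mem_sep_iff]
      constructor
      · intro hw
        have : w ∈ B ∪ C := by rw [hBC]; trivial
        rcases this with h | h
        · exact Or.inl ⟨h, hw⟩
        · exact Or.inr ⟨h, hw⟩
      · rintro (⟨-, hw⟩ | ⟨-, hw⟩) <;> exact hw
    have hdisj' : Disjoint {w ∈ B | G.Adj v w} {w ∈ C | G.Adj v w} := by
      rw [Set.disjoint_left]
      rintro w ⟨hw1, -⟩ ⟨hw2, -⟩
      exact hBCd w hw1 hw2
    have h3 := hcubic v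
    rw [hsplit, Set.ncard_union_eq hdisj' (Set.toFinite _) (Set.toFinite _), hB v hv] at h3
    omega
  have cross12 : ∀ v ∈ A1, {w ∈ A2 | G.Adj v w}.ncard = 2 :=
    crosscount A1 A2 hunion hnot h1
  have cross21 : ∀ v ∈ A2, {w ∈ A1 | G.Adj v w}.ncard = 2 :=
    crosscount A2 A1 (by rw [Set.union_comm]; exact hunion) (fun v h h' => hnot v h' h) h2
  obtain ⟨f, hfinj, hf⟩ := hall_cross cross12 cross21
  obtain ⟨g, hginj, hg⟩ := hall_cross cross21 cross12
  set F : A1 → A2 := fun v => ⟨f v, (hf v).1⟩ with hFdef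
  have hFinj : Function.Injective F := fun a b hab => hfinj (congrArg Subtype.val hab)
  set Gg : A2 → A1 := fun w => ⟨g w, (hg w).1⟩ with hGdef
  have hGinj : Function.Injective Gg := fun a b hab => hginj (congrArg Subtype.val hab)
  have hFbij : Function.Bijective F := by
    rw [Fintype.bijective_iff_injective_and_card]
    exact ⟨hFinj, le_antisymm (Fintype.card_le_of_injective F hFinj)
      (Fintype.card_le_of_injective Gg hGinj)⟩
  have hFadj : ∀ v : A1, G.Adj v.1 (F v).1 := fun v => (hf v).2
  -- the substantive cases
  have case00 : ∀ e f' : G.edgeSet, e ≠ f' →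
      (∃ v : A1, (e : Sym2 V) = s(v.1, (F v).1)) →
      (∃ v : A1, (f' : Sym2 V) = s(v.1, (F v).1)) →
      2 ≤ G.lineGraph.edist e f' := by
    rintro e f' hne ⟨v, hv⟩ ⟨v', hv'⟩
    have hvv' : v ≠ v' := by
      rintro rfl
      exact hne (Subtype.ext (hv.trans hv'.symm))
    apply two_le_edist_of_not_adj hne
    intro hadj
    obtain ⟨-, x, hxe, hxf⟩ := lineGraph_adj_iff_exists.mp hadj
    rw [hv, Sym2.mem_iff] at hxe
    rw [hv', Sym2.mem_iff] at hxf
    rcases hxe with rfl | rfl <;> rcases hxf with hx | hx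
    · exact hvv' (Subtype.ext hx)
    · exact hnot v.1 v.2 (by rw [hx]; exact (F v').2)
    · exact hnot v'.1 v'.2 (by rw [← hx]; exact (F v).2)
    · exact hvv' (hFinj (Subtype.ext hx))
  have crossrep : ∀ e : G.edgeSet, ¬(∀ x ∈ (e : Sym2 V), x ∈ A1) →
      ¬(∀ x ∈ (e : Sym2 V), x ∈ A2) →
      ∃ a b, (e : Sym2 V) = s(a, b) ∧ a ∈ A1 ∧ b ∈ A2 ∧ G.Adj a b := by
    rintro ⟨z, hz⟩ hn1 hn2
    induction z using Sym2.ind with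
    | _ a b =>
      have hab : G.Adj a b := hz
      have hmemz : ∀ x, x ∈ ((⟨s(a, b), hz⟩ : G.edgeSet) : Sym2 V) ↔ x = a ∨ x = b := by
        intro x
        exact Sym2.mem_iff
      rcases hmem a with ha | ha <;> rcases hmem b with hb | hb
      · exfalso
        apply hn1
        intro x hx
        rcases (hmemz x).mp hx with rfl | rfl <;> assumption
      · exact ⟨a, b, rfl, ha, hb, hab⟩
      · exact ⟨b, a, Sym2.eq_swap, hb, ha, hab.symm⟩
      · exfalso
        apply hn2
        intro x hx
        rcases (hmemz x).mp hx with rfl | rfl <;> assumption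
  have case11 : ∀ e f' : G.edgeSet, e ≠ f' →
      ¬(∀ x ∈ (e : Sym2 V), x ∈ A1) → ¬(∀ x ∈ (e : Sym2 V), x ∈ A2) →
      ¬(∃ v : A1, (e : Sym2 V) = s(v.1, (F v).1)) →
      ¬(∀ x ∈ (f' : Sym2 V), x ∈ A1) → ¬(∀ x ∈ (f' : Sym2 V), x ∈ A2) →
      ¬(∃ v : A1, (f' : Sym2 V) = s(v.1, (F v).1)) →
      2 ≤ G.lineGraph.edist e f' := by
    intro e f' hne he1 he2 hMe hf1 hf2 hMf
    obtain ⟨a, b, heq, ha1, hb2, hab⟩ := crossrep e he1 he2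
    obtain ⟨a', b', heq', ha'1, hb'2, hab'⟩ := crossrep f' hf1 hf2
    have hbF : b ≠ (F ⟨a, ha1⟩).1 := by
      intro hb
      exact hMe ⟨⟨a, ha1⟩, by rw [heq, hb]⟩
    have hbF' : b' ≠ (F ⟨a', ha'1⟩).1 := by
      intro hb
      exact hMf ⟨⟨a', ha'1⟩, by rw [heq', hb]⟩
    apply two_le_edist_of_not_adj hne
    intro hadj
    obtain ⟨-, x, hxe, hxf⟩ := lineGraph_adj_iff_exists.mp hadj
    rw [heq, Sym2.mem_iff] at hxe
    rw [heq', Sym2.mem_iff] at hxf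
    have hnef : ¬(a = a' ∧ b = b') := by
      rintro ⟨rfl, rfl⟩
      exact hne (Subtype.ext (heq.trans heq'.symm))
    rcases hxe with rfl | rfl <;> rcases hxf with hx | hx
    · -- x = a = a'
      subst hx
      have hbb' : b ≠ b' := fun hh => hnef ⟨rfl, hh⟩
      have hFa := hFadj ⟨x, ha1⟩
      refine not_three_in_two' (cross12 x ha1) (Set.toFinite _)
        (⟨hb2, hab⟩ : b ∈ {w ∈ A2 | G.Adj x w})
        (⟨hb'2, hab'⟩ : b' ∈ {w ∈ A2 | G.Adj x w})
        (⟨(F ⟨x, ha1⟩).2, hFa⟩ : (F ⟨x, ha1⟩).1 ∈ {w ∈ A2 | G.Adj x w})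
        hbb' hbF ?_
      intro hh
      exact hbF' (by rw [hh])
    · -- x = a = b'
      exact hnot x ha1 (hx ▸ hb'2)
    · -- x = b = a'
      exact hnot x (hx ▸ ha'1) hb2
    · -- x = b = b'
      subst hx
      have haa' : a ≠ a' := fun hh => hnef ⟨hh, rfl⟩
      obtain ⟨u, hu⟩ := hFbij.2 ⟨x, hb2⟩
      have huadj : G.Adj x u.1 := by
        have := hFadj u
        rw [hu] at this
        exact this.symm
      have hua : u.1 ≠ a := by
        intro hh
        apply hbF
        rw [show (⟨a, ha1⟩ : A1) = u from Subtype.ext hh.symm, hu]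
      have hua' : u.1 ≠ a' := by
        intro hh
        apply hbF'
        rw [show (⟨a', ha'1⟩ : A1) = u from Subtype.ext hh.symm, hu]
      exact not_three_in_two' (cross21 x hb2) (Set.toFinite _)
        (⟨ha1, hab.symm⟩ : a ∈ {w ∈ A1 | G.Adj x w})
        (⟨ha'1, hab'.symm⟩ : a' ∈ {w ∈ A1 | G.Adj x w})
        (⟨u.2, huadj⟩ : u.1 ∈ {w ∈ A1 | G.Adj x w})
        haa' (Ne.symm hua) (Ne.symm hua')
  -- the coloring
  refine ⟨fun e =>
    if (∀ x ∈ (e : Sym2 V), x ∈ A1) then ⟨2, by norm_num⟩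
    else if (∀ x ∈ (e : Sym2 V), x ∈ A2) then ⟨3, by norm_num⟩
    else if (∃ v : A1, (e : Sym2 V) = s(v.1, (F v).1)) then ⟨0, by norm_num⟩
    else ⟨1, by norm_num⟩, ?_⟩
  intro e f' hne hcol
  dsimp only at hcol ⊢
  split_ifs at hcol ⊢ <;>
    first
      | exact absurd hcol (by decide)
      | (exact le_trans (by norm_num) (matching_far h1 hne ‹_› ‹_›))
      | (exact le_trans (by norm_num) (matching_far h2 hne ‹_› ‹_›))
      | (exact le_trans (by norm_num) (case00 e f' hne ‹_› ‹_›))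
      | (exact le_trans (by norm_num) (case11 e f' hne ‹_› ‹_› ‹_› ‹_› ‹_› ‹_›))

private lemma line_adj {G : SimpleGraph V} {e f : G.edgeSet} (hne : e ≠ f) (x : V)
    (hx : x ∈ (e : Sym2 V)) (hx' : x ∈ (f : Sym2 V)) : G.lineGraph.Adj e f :=
  lineGraph_adj_iff_exists.mpr ⟨hne, x, hx, hx'⟩

private lemma edist_le_two_of_adj_adj {α : Type*} {H : SimpleGraph α} {u v w : α}
    (h1 : H.Adj u w) (h2 : H.Adj w v) : H.edist u v ≤ 2 := by
  calc H.edist u v ≤ H.edist u w + H.edist w v := SimpleGraph.edist_triangle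
    _ ≤ 1 + 1 := add_le_add (SimpleGraph.edist_eq_one_iff_adj.mpr h1).le
        (SimpleGraph.edist_eq_one_iff_adj.mpr h2).le
    _ = 2 := by norm_num

private lemma bwd {V : Type*} [Fintype V] {G : SimpleGraph V} (hcubic : IsCubicGraph G)
    (h : HasPackingEdgeColoring G [1, 1, 2, 2]) : IsTwoMatchingColorable G := by
  obtain ⟨c, hc⟩ := h
  have nbrs : ∀ v, ∃ a b c', a ≠ b ∧ a ≠ c' ∧ b ≠ c' ∧
      G.neighborSet v = {a, b, c'} := fun v => Set.ncard_eq_three.mp (hcubic v)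
  -- distinct same-colored edges are non-adjacent in the line graph
  have key2 : ∀ e f : G.edgeSet, e ≠ f → c e = c f → ¬ G.lineGraph.Adj e f := by
    intro e f hne hcol hadj
    have h2 := hc e f hne hcol
    rw [SimpleGraph.edist_eq_one_iff_adj.mpr hadj] at h2
    have h1 : 1 ≤ [1, 1, 2, 2].get (c e) :=
      (by decide : ∀ k : Fin ([1, 1, 2, 2] : List ℕ).length, 1 ≤ [1, 1, 2, 2].get k) (c e)
    have : ((1 : ℕ) : ℕ∞) + 1 ≤ 1 :=
      le_trans (add_le_add (by exact_mod_cast h1) le_rfl) h2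
    norm_num at this
  -- distinct edges colored 2 or 3 have no common neighbor in the line graph
  have key3 : ∀ e f : G.edgeSet, e ≠ f → c e = c f → (c e = (⟨2, by norm_num⟩ : Fin ([1, 1, 2, 2] : List ℕ).length) ∨ c e = (⟨3, by norm_num⟩ : Fin ([1, 1, 2, 2] : List ℕ).length)) →
      ∀ g, ¬(G.lineGraph.Adj e g ∧ G.lineGraph.Adj g f) := by
    intro e f hne hcol hk g hg
    obtain ⟨h1, h2⟩ := hg
    have hd := hc e f hne hcol
    have hval : (([1, 1, 2, 2] : List ℕ).get (c e) : ℕ∞) = 2 := by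
      rcases hk with hk | hk <;> rw [hk] <;> rfl
    rw [hval] at hd
    have := hd.trans (edist_le_two_of_adj_adj h1 h2)
    norm_num at this
  -- edges at a common vertex get distinct colors
  have colNe : ∀ {v a b : V} (ha : G.Adj v a) (hb : G.Adj v b), a ≠ b →
      c ⟨s(v, a), ha⟩ ≠ c ⟨s(v, b), hb⟩ := by
    intro v a b ha hb hab hcc
    have hne : (⟨s(v, a), ha⟩ : G.edgeSet) ≠ ⟨s(v, b), hb⟩ := by
      intro h
      have h' : s(v, a) = s(v, b) := congrArg Subtype.val h
      rw [Sym2.eq_iff] at h'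
      rcases h' with ⟨-, h'⟩ | ⟨h1, h2⟩
      · exact hab h'
      · exact hab (h2.trans h1)
    exact key2 _ _ hne hcc (line_adj hne v (by simp) (by simp))
  -- the key structural step
  have step : ∀ (v u w : V) (hu : G.Adj v u) (hw : G.Adj v w) (k : Fin ([1, 1, 2, 2] : List ℕ).length),
      (k = (⟨2, by norm_num⟩ : Fin ([1, 1, 2, 2] : List ℕ).length) ∨ k = (⟨3, by norm_num⟩ : Fin ([1, 1, 2, 2] : List ℕ).length)) → c ⟨s(v, u), hu⟩ = k → u ≠ w →
      ∀ (z : V) (hz : G.Adj w z), z ≠ v → c ⟨s(w, z), hz⟩ ≠ k := by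
    intro v u w hu hw k hk hcu hne z hz hzv hcz
    have hee' : (⟨s(v, u), hu⟩ : G.edgeSet) ≠ ⟨s(w, z), hz⟩ := by
      intro h
      have h' : s(v, u) = s(w, z) := congrArg Subtype.val h
      have hwmem : w ∈ s(v, u) := by rw [h']; simp
      rw [Sym2.mem_iff] at hwmem
      rcases hwmem with h'' | h''
      · exact hw.ne h''.symm
      · exact hne h''.symm
    have heg : (⟨s(v, u), hu⟩ : G.edgeSet) ≠ ⟨s(v, w), hw⟩ := by
      intro h
      have h' : s(v, u) = s(v, w) := congrArg Subtype.val h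
      rw [Sym2.eq_iff] at h'
      rcases h' with ⟨-, h''⟩ | ⟨h1, -⟩
      · exact hne h''
      · exact hw.ne h1
    have hge' : (⟨s(v, w), hw⟩ : G.edgeSet) ≠ ⟨s(w, z), hz⟩ := by
      intro h
      have h' : s(v, w) = s(w, z) := congrArg Subtype.val h
      have hvmem : v ∈ s(w, z) := by rw [← h']; simp
      rw [Sym2.mem_iff] at hvmem
      rcases hvmem with h'' | h''
      · exact hw.ne h''
      · exact hzv h''.symm
    refine key3 ⟨s(v, u), hu⟩ ⟨s(w, z), hz⟩ hee' (by rw [hcu, hcz]) (by rw [hcu]; exact hk)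
      ⟨s(v, w), hw⟩ ⟨line_adj heg v (by simp) (by simp), line_adj hge' w (by simp) (by simp)⟩
  -- adjacency from neighbor-set description
  have adj_of_mem : ∀ {v : V} {a b c' : V}, G.neighborSet v = {a, b, c'} →
      ∀ y ∈ ({a, b, c'} : Set V), G.Adj v y := by
    intro v a b c' hset y hy
    rw [← hset] at hy
    exact hy
  have pigeon : ∀ kp kq kr : Fin 4, kp ≠ kq → kp ≠ kr → kq ≠ kr →
      kp ≠ 2 → kp ≠ 3 → kq ≠ 2 → kq ≠ 3 → kr ≠ 2 → kr ≠ 3 → False := by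
    intro kp kq kr h1 h2 h3 h4 h5 h6 h7 h8 h9
    simp only [ne_eq, Fin.ext_iff] at h1 h2 h3 h4 h5 h6 h7 h8 h9
    have i1 := kp.isLt; have i2 := kq.isLt; have i3 := kr.isLt
    simp only [Fin.val_two] at *
    omega
  -- no vertex is incident to both a 2-colored and a 3-colored edge
  have claimA : ∀ (v u w : V) (hu : G.Adj v u) (hw : G.Adj v w),
      c ⟨s(v, u), hu⟩ = (⟨2, by norm_num⟩ : Fin ([1, 1, 2, 2] : List ℕ).length) → c ⟨s(v, w), hw⟩ = (⟨3, by norm_num⟩ : Fin ([1, 1, 2, 2] : List ℕ).length) → False := by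
    intro v u w hu hw h2 h3
    have huw : u ≠ w := by
      intro h
      subst h
      exact absurd (h2.symm.trans h3) (by decide)
    obtain ⟨a, b, c', hab, hac, hbc, hset⟩ := nbrs v
    have hadj := adj_of_mem hset
    have hu' : u ∈ ({a, b, c'} : Set V) := by rw [← hset]; exact hu
    have hw' : w ∈ ({a, b, c'} : Set V) := by rw [← hset]; exact hw
    obtain ⟨x, hx, hxu, hxw⟩ : ∃ x, G.Adj v x ∧ x ≠ u ∧ x ≠ w := by
      rcases hu' with rfl | rfl | rfl <;> rcases hw' with rfl | rfl | rfl
      · exact absurd rfl huw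
      · exact ⟨c', hadj c' (by simp), hac.symm, hbc.symm⟩
      · exact ⟨b, hadj b (by simp), hab.symm, hbc⟩
      · exact ⟨c', hadj c' (by simp), hbc.symm, hac.symm⟩
      · exact absurd rfl huw
      · exact ⟨a, hadj a (by simp), hab, hac⟩
      · exact ⟨b, hadj b (by simp), hbc, hab.symm⟩
      · exact ⟨a, hadj a (by simp), hac, hab⟩
      · exact absurd rfl huw
    -- every edge at x avoids colors 2 and 3
    have hcolx : ∀ (y : V) (hy : G.Adj x y),
        c ⟨s(x, y), hy⟩ ≠ (⟨2, by norm_num⟩ : Fin ([1, 1, 2, 2] : List ℕ).length) ∧ c ⟨s(x, y), hy⟩ ≠ (⟨3, by norm_num⟩ : Fin ([1, 1, 2, 2] : List ℕ).length) := by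
      intro y hy
      by_cases hyv : y = v
      · have hswap : (⟨s(x, y), hy⟩ : G.edgeSet) = ⟨s(v, x), hx⟩ :=
          Subtype.ext (by show s(x, y) = s(v, x); rw [hyv]; exact Sym2.eq_swap)
        rw [hswap]
        exact ⟨fun hcc => colNe hx hu hxu (hcc.trans h2.symm),
          fun hcc => colNe hx hw hxw (hcc.trans h3.symm)⟩
      · exact ⟨step v u x hu hx (⟨2, by norm_num⟩ : Fin ([1, 1, 2, 2] : List ℕ).length) (Or.inl rfl) h2 (fun h => hxu h.symm) y hy hyv,
          step v w x hw hx (⟨3, by norm_num⟩ : Fin ([1, 1, 2, 2] : List ℕ).length) (Or.inr rfl) h3 (fun h => hxw h.symm) y hy hyv⟩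
    obtain ⟨p, q, r, hpq, hpr, hqr, hsx⟩ := nbrs x
    have hadjx := adj_of_mem hsx
    have hp : G.Adj x p := hadjx p (by simp)
    have hq : G.Adj x q := hadjx q (by simp)
    have hr : G.Adj x r := hadjx r (by simp)
    have d1 := colNe hp hq hpq
    have d2 := colNe hp hr hpr
    have d3 := colNe hq hr hqr
    obtain ⟨p2, p3⟩ := hcolx p hp
    obtain ⟨q2, q3⟩ := hcolx q hq
    obtain ⟨r2, r3⟩ := hcolx r hr
    exact pigeon _ _ _ d1 d2 d3 p2 p3 q2 q3 r2 r3
  -- every vertex has an edge colored 2 or 3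
  have claimB : ∀ v : V, ∃ u, ∃ hu : G.Adj v u,
      c ⟨s(v, u), hu⟩ = (⟨2, by norm_num⟩ : Fin ([1, 1, 2, 2] : List ℕ).length) ∨ c ⟨s(v, u), hu⟩ = (⟨3, by norm_num⟩ : Fin ([1, 1, 2, 2] : List ℕ).length) := by
    intro v
    by_contra hcon
    push_neg at hcon
    obtain ⟨a, b, c', hab, hac, hbc, hset⟩ := nbrs v
    have hadj := adj_of_mem hset
    have ha : G.Adj v a := hadj a (by simp)
    have hb : G.Adj v b := hadj b (by simp)
    have hc' : G.Adj v c' := hadj c' (by simp)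
    have d1 := colNe ha hb hab
    have d2 := colNe ha hc' hac
    have d3 := colNe hb hc' hbc
    obtain ⟨p2, p3⟩ := hcon a ha
    obtain ⟨q2, q3⟩ := hcon b hb
    obtain ⟨r2, r3⟩ := hcon c' hc'
    exact pigeon _ _ _ d1 d2 d3 p2 p3 q2 q3 r2 r3
  -- the partner of a vertex in its color class
  have partner : ∀ (K : Fin ([1, 1, 2, 2] : List ℕ).length),
      (K = (⟨2, by norm_num⟩ : Fin ([1, 1, 2, 2] : List ℕ).length) ∨ K = (⟨3, by norm_num⟩ : Fin ([1, 1, 2, 2] : List ℕ).length)) → ∀ v u (hu : G.Adj v u), c ⟨s(v, u), hu⟩ = K →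
      {w ∈ {v' | ∃ u', ∃ hu' : G.Adj v' u', c ⟨s(v', u'), hu'⟩ = K} | G.Adj v w} = {u} := by
    intro K hK v u hu hcu
    ext w
    simp only [Set.mem_setOf_eq, Set.mem_sep_iff, Set.mem_singleton_iff]
    constructor
    · rintro ⟨⟨z, hz, hcz⟩, hvw⟩
      by_contra hwu
      by_cases hzv : z = v
      · have hswap : (⟨s(w, z), hz⟩ : G.edgeSet) = ⟨s(v, w), hvw⟩ :=
          Subtype.ext (by show s(w, z) = s(v, w); rw [hzv]; exact Sym2.eq_swap)
        apply colNe hvw hu hwu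
        rw [← hswap, hcz, hcu]
      · exact step v u w hu hvw K hK hcu (fun h => hwu h.symm) z hz hzv hcz
    · rintro rfl
      refine ⟨⟨v, hu.symm, ?_⟩, hu⟩
      have hswap : (⟨s(w, v), hu.symm⟩ : G.edgeSet) = ⟨s(v, w), hu⟩ :=
        Subtype.ext Sym2.eq_swap
      rw [hswap]
      exact hcu
  refine ⟨{v | ∃ u, ∃ hu : G.Adj v u, c ⟨s(v, u), hu⟩ = (⟨2, by norm_num⟩ : Fin ([1, 1, 2, 2] : List ℕ).length)},
    {v | ∃ u, ∃ hu : G.Adj v u, c ⟨s(v, u), hu⟩ = (⟨3, by norm_num⟩ : Fin ([1, 1, 2, 2] : List ℕ).length)}, ?_, ?_, ?_, ?_⟩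
  · ext v
    simp only [Set.mem_union, Set.mem_setOf_eq, Set.mem_univ, iff_true]
    obtain ⟨u, hu, h | h⟩ := claimB v
    · exact Or.inl ⟨u, hu, h⟩
    · exact Or.inr ⟨u, hu, h⟩
  · rw [Set.disjoint_left]
    rintro v ⟨u, hu, h2⟩ ⟨w, hw, h3⟩
    exact claimA v u w hu hw h2 h3
  · rintro v ⟨u, hu, hcu⟩
    rw [partner (⟨2, by norm_num⟩ : Fin ([1, 1, 2, 2] : List ℕ).length) (Or.inl rfl) v u hu hcu, Set.ncard_singleton]
  · rintro v ⟨u, hu, hcu⟩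
    rw [partner (⟨3, by norm_num⟩ : Fin ([1, 1, 2, 2] : List ℕ).length) (Or.inr rfl) v u hu hcu, Set.ncard_singleton]

/-- A cubic graph is 2-matching-colorable iff it admits a (1,1,2,2)-packing edge-coloring. -/
theorem statement_15 {V : Type*} [Fintype V] (G : SimpleGraph V)
    (hconn : G.Connected) (hcubic : IsCubicGraph G) :
    IsTwoMatchingColorable G ↔ HasPackingEdgeColoring G [1, 1, 2, 2] := by
  exact ⟨fun h => fwd hcubic h, fun h => bwd hcubic h⟩
end

section
/- Every cubic graph G that admits a (1,1,2,2)-packing edge-coloring is 3-edge-colorable and has order divisible by 4. -/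
open SimpleGraph

variable {V : Type*}

namespace PackingAux
open Finset

attribute [local instance] Classical.propDecidable

variable {V : Type*} [Fintype V]

noncomputable local instance (G : SimpleGraph V) : Fintype G.edgeSet := Fintype.ofFinite _

/-- incident edges of a vertex -/
noncomputable def incid (G : SimpleGraph V) (v : V) : Finset G.edgeSet :=
  Finset.univ.filter (fun e => v ∈ (e : Sym2 V))

variable {G : SimpleGraph V}

lemma mem_incid {v : V} {e : G.edgeSet} : e ∈ incid G v ↔ v ∈ (e : Sym2 V) := by
  simp [incid]

lemma exists_endpoints (e : G.edgeSet) : ∃ u w : V, u ≠ w ∧ (e : Sym2 V) = s(u, w) := by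
  obtain ⟨e, he⟩ := e
  induction e with
  | _ u w => exact ⟨u, w, (G.mem_edgeSet.mp he).ne, rfl⟩

lemma incid_card (hcubic : ∀ v, (G.neighborSet v).ncard = 3) (v : V) :
    (incid G v).card = 3 := by
  have h3 : (Finset.univ.filter (fun w => G.Adj v w)).card = 3 := by
    have hn := hcubic v
    rw [Set.ncard_eq_toFinset_card'] at hn
    rw [← hn]
    congr 1
    ext w
    simp
  rw [← h3]
  symm
  refine Finset.card_bij (fun w hw => (⟨s(v, w), by
      simpa using (Finset.mem_filter.mp hw).2⟩ : G.edgeSet)) ?_ ?_ ?_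
  · intro w hw
    simp [mem_incid]
  · intro w1 h1 w2 h2 hinj
    have : (s(v, w1) : Sym2 V) = s(v, w2) := congrArg Subtype.val hinj
    exact (Sym2.congr_right).mp this
  · intro e he
    have hv : v ∈ (e : Sym2 V) := mem_incid.mp he
    obtain ⟨u, w, huw, hrep⟩ := exists_endpoints e
    have hadj : G.Adj u w := G.mem_edgeSet.mp (hrep ▸ e.2)
    rw [hrep] at hv
    rcases Sym2.mem_iff.mp hv with rfl | rfl
    · exact ⟨w, by simp [hadj], Subtype.ext hrep.symm⟩
    · exact ⟨u, by simp [hadj.symm], by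
        apply Subtype.ext
        simp only [hrep, Sym2.eq_swap]⟩

variable (G) in
/-- number of edges of class `i` at `v` -/
noncomputable def cnt (c : G.edgeSet → Fin 4) (v : V) (i : Fin 4) : ℕ :=
  ((incid G v).filter (fun e => c e = i)).card

variable (G) in
noncomputable def cls (c : G.edgeSet → Fin 4) (i : Fin 4) : Finset G.edgeSet :=
  Finset.univ.filter (fun e => c e = i)

lemma cls_filter (c : G.edgeSet → Fin 4) (v : V) (i : Fin 4) :
    ((cls G c i).filter (fun e : G.edgeSet => v ∈ (e : Sym2 V))).card = cnt G c v i := by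
  apply congrArg Finset.card
  rw [cls, incid, Finset.filter_filter, Finset.filter_filter]
  exact Finset.filter_congr fun e _ => by tauto

lemma double_count (S : Finset G.edgeSet) (f : V → ℕ) :
    ∑ e ∈ S, ∑ v : V, (if v ∈ (e : Sym2 V) then f v else 0)
      = ∑ v : V, (S.filter (fun e : G.edgeSet => v ∈ (e : Sym2 V))).card * f v := by
  rw [Finset.sum_comm]
  refine Finset.sum_congr rfl fun v _ => ?_
  rw [Finset.sum_ite, Finset.sum_const, Finset.sum_const_zero, add_zero, smul_eq_mul]

lemma edge_eval {e : G.edgeSet} {u w : V} (huw : u ≠ w) (he : (e : Sym2 V) = s(u, w))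
    (f : V → ℕ) :
    ∑ v : V, (if v ∈ (e : Sym2 V) then f v else 0) = f u + f w := by
  rw [← Finset.sum_filter]
  have : Finset.univ.filter (fun v => v ∈ (e : Sym2 V)) = {u, w} := by
    ext x
    simp [he, Sym2.mem_iff]
  rw [this, Finset.sum_pair huw]

lemma sum_cnt (hcubic : ∀ v, (G.neighborSet v).ncard = 3) (c : G.edgeSet → Fin 4) (v : V) :
    ∑ i : Fin 4, cnt G c v i = 3 := by
  rw [← incid_card hcubic v]
  exact (Finset.card_eq_sum_card_fiberwise (fun e _ => Finset.mem_univ (c e))).symm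

section withColoring

variable {c : G.edgeSet → Fin 4}

lemma adj_of_shared {e f : G.edgeSet} (hne : e ≠ f) {v : V} (hv : v ∈ (e : Sym2 V))
    (hv' : v ∈ (f : Sym2 V)) : G.lineGraph.Adj e f :=
  lineGraph_adj_iff_exists.mpr ⟨hne, v, hv, hv'⟩

variable (hm : ∀ e f : G.edgeSet, e ≠ f → c e = c f → ¬ G.lineGraph.Adj e f)

include hm in
lemma cnt_le_one (v : V) (i : Fin 4) : cnt G c v i ≤ 1 := by
  by_contra hlt
  push_neg at hlt
  obtain ⟨e, he, f, hf, hef⟩ := Finset.one_lt_card.mp hlt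
  simp only [Finset.mem_filter, mem_incid] at he hf
  exact hm e f hef (he.2.trans hf.2.symm) (adj_of_shared hef he.1 hf.1)

variable (G) in
noncomputable def nbr (e : G.edgeSet) : Finset G.edgeSet :=
  Finset.univ.filter (fun g => G.lineGraph.Adj e g)

lemma nbr_eq {e : G.edgeSet} {u w : V} (huw : u ≠ w) (he : (e : Sym2 V) = s(u, w)) :
    nbr G e = (incid G u ∪ incid G w).erase e := by
  ext g
  simp only [nbr, Finset.mem_filter, Finset.mem_univ, true_and, Finset.mem_erase,
    Finset.mem_union, mem_incid, lineGraph_adj_iff_exists, he]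
  constructor
  · rintro ⟨hne, x, hx, hxg⟩
    refine ⟨fun hh => hne hh.symm, ?_⟩
    rcases Sym2.mem_iff.mp hx with rfl | rfl
    · exact Or.inl hxg
    · exact Or.inr hxg
  · rintro ⟨hne, hx | hx⟩
    · exact ⟨fun hh => hne hh.symm, u, by simp, hx⟩
    · exact ⟨fun hh => hne hh.symm, w, by simp, hx⟩

lemma incid_inter {e : G.edgeSet} {u w : V} (huw : u ≠ w) (he : (e : Sym2 V) = s(u, w)) :
    incid G u ∩ incid G w = {e} := by
  ext g
  simp only [Finset.mem_inter, mem_incid, Finset.mem_singleton]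
  constructor
  · rintro ⟨h1, h2⟩
    exact Subtype.ext (((Sym2.mem_and_mem_iff huw).mp ⟨h1, h2⟩).trans he.symm)
  · rintro rfl
    constructor <;> simp [he]

include hm in
lemma nbr_card (hcubic : ∀ v, (G.neighborSet v).ncard = 3) {e : G.edgeSet} {u w : V}
    (huw : u ≠ w) (he : (e : Sym2 V) = s(u, w)) : (nbr G e).card = 4 := by
  rw [nbr_eq huw he]
  have hcard : (incid G u ∪ incid G w).card = 5 := by
    have := Finset.card_union_add_card_inter (incid G u) (incid G w)
    rw [incid_inter huw he, incid_card hcubic, incid_card hcubic] at this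
    simpa using this
  have hmem : e ∈ incid G u ∪ incid G w := by
    simp [Finset.mem_union, mem_incid, he]
  rw [Finset.card_erase_of_mem hmem, hcard]


include hm in
lemma nbr_self_empty {e : G.edgeSet} {i : Fin 4} (he : c e = i) :
    ((nbr G e).filter (fun g => c g = i)).card = 0 := by
  rw [Finset.card_eq_zero, Finset.filter_eq_empty_iff]
  intro g hg hgc
  have hadj : G.lineGraph.Adj e g := by simpa [nbr] using hg
  exact hm e g hadj.ne (he.trans hgc.symm) hadj

lemma nbr_other {i j : Fin 4} (hij : i ≠ j) {e : G.edgeSet} (he : c e = i)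
    {u w : V} (huw : u ≠ w) (hrep : (e : Sym2 V) = s(u, w)) :
    ((nbr G e).filter (fun g => c g = j)).card = cnt G c u j + cnt G c w j := by
  have hset : (nbr G e).filter (fun g => c g = j)
      = ((incid G u).filter (fun g => c g = j)) ∪ ((incid G w).filter (fun g => c g = j)) := by
    rw [nbr_eq huw hrep]
    ext g
    simp only [Finset.mem_filter, Finset.mem_erase, Finset.mem_union, mem_incid]
    constructor
    · rintro ⟨⟨hne, h | h⟩, hj⟩
      · exact Or.inl ⟨h, hj⟩
      · exact Or.inr ⟨h, hj⟩
    · have hge : c g = j → g ≠ e := by rintro hj rfl; exact hij (he.symm.trans hj)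
      rintro (⟨h, hj⟩ | ⟨h, hj⟩)
      · exact ⟨⟨hge hj, Or.inl h⟩, hj⟩
      · exact ⟨⟨hge hj, Or.inr h⟩, hj⟩
  rw [hset, Finset.card_union_of_disjoint, cnt, cnt]
  rw [Finset.disjoint_left]
  intro g hg1 hg2
  simp only [Finset.mem_filter] at hg1 hg2
  have : g ∈ incid G u ∩ incid G w := Finset.mem_inter.mpr ⟨hg1.1, hg2.1⟩
  rw [incid_inter huw hrep, Finset.mem_singleton] at this
  subst this
  exact hij (he.symm.trans hg1.2)

include hm in
lemma nbr_partition (hcubic : ∀ v, (G.neighborSet v).ncard = 3) (e : G.edgeSet) :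
    ∑ k : Fin 4, ((nbr G e).filter (fun g => c g = k)).card = 4 := by
  obtain ⟨u, w, huw, hrep⟩ := exists_endpoints e
  have hf : (nbr G e).card = ∑ k : Fin 4, ((nbr G e).filter (fun g => c g = k)).card :=
    Finset.card_eq_sum_card_fiberwise (fun g _ => Finset.mem_univ (c g))
  rw [← hf]
  exact nbr_card hm hcubic huw hrep

include hm in
lemma class_count_ineq (hcubic : ∀ v, (G.neighborSet v).ncard = 3) {i j : Fin 4}
    (hs : ∀ e f : G.edgeSet, e ≠ f → c e = i → c f = i →
      ∀ g, G.lineGraph.Adj e g → G.lineGraph.Adj g f → False)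
    (hij : (i = 2 ∧ j = 3) ∨ (i = 3 ∧ j = 2)) :
    4 * (cls G c i).card ≤ (cls G c 0).card + (cls G c 1).card
      + ∑ v : V, cnt G c v i * cnt G c v j := by
  have hne : i ≠ j := by rcases hij with ⟨rfl, rfl⟩ | ⟨rfl, rfl⟩ <;> decide
  -- per-edge identity
  have hper : ∀ e ∈ cls G c i,
      ((nbr G e).filter (fun g => c g = 0)).card + ((nbr G e).filter (fun g => c g = 1)).card
        + (∑ v : V, if v ∈ (e : Sym2 V) then cnt G c v j else 0) = 4 := by
    intro e hei
    have he : c e = i := by simpa [cls] using hei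
    obtain ⟨u, w, huw, hrep⟩ := exists_endpoints e
    have h4 := nbr_partition hm hcubic e
    rw [Fin.sum_univ_four] at h4
    have hself := nbr_self_empty hm he
    have hother := nbr_other hne he huw hrep
    have heval := edge_eval huw hrep (fun v => cnt G c v j)
    rw [heval]
    rcases hij with ⟨rfl, rfl⟩ | ⟨rfl, rfl⟩ <;> omega
  -- summing
  have hsum : ∑ e ∈ cls G c i, (((nbr G e).filter (fun g => c g = 0)).card
      + ((nbr G e).filter (fun g => c g = 1)).card
      + (∑ v : V, if v ∈ (e : Sym2 V) then cnt G c v j else 0)) = 4 * (cls G c i).card := by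
    rw [Finset.sum_congr rfl hper, Finset.sum_const, smul_eq_mul, mul_comm]
  rw [Finset.sum_add_distrib, Finset.sum_add_distrib] at hsum
  have hdc : ∑ e ∈ cls G c i, (∑ v : V, if v ∈ (e : Sym2 V) then cnt G c v j else 0)
      = ∑ v : V, cnt G c v i * cnt G c v j := by
    rw [double_count]
    exact Finset.sum_congr rfl fun v _ => by rw [cls_filter]
  have hbound : ∀ k : Fin 4, (∀ g : G.edgeSet, c g = k → g ∈ cls G c k) →
      ∑ e ∈ cls G c i, ((nbr G e).filter (fun g => c g = k)).card ≤ (cls G c k).card := by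
    intro k hk
    rw [← Finset.card_biUnion]
    · apply Finset.card_le_card
      intro g hg
      obtain ⟨e, he, hge⟩ := Finset.mem_biUnion.mp hg
      exact hk g (Finset.mem_filter.mp hge).2
    · intro e hei f hfi hef
      have he : c e = i := by simpa [cls] using hei
      have hf : c f = i := by simpa [cls] using hfi
      rw [Function.onFun, Finset.disjoint_left]
      intro g hg1 hg2
      have h1' := Finset.mem_filter.mp hg1
      have h2' := Finset.mem_filter.mp hg2
      have h1 : G.lineGraph.Adj e g := by simpa [nbr] using h1'.1
      have h2 : G.lineGraph.Adj f g := by simpa [nbr] using h2'.1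
      exact hs e f hef he hf g h1 h2.symm
  have hb0 := hbound 0 (fun g hg => by simp [cls, hg])
  have hb1 := hbound 1 (fun g hg => by simp [cls, hg])
  rw [hdc] at hsum
  omega


lemma two_t (i : Fin 4) : 2 * (cls G c i).card = ∑ v : V, cnt G c v i := by
  have hdc := double_count (cls G c i) (fun _ => 1)
  have hL : ∑ e ∈ cls G c i, (∑ v : V, if v ∈ (e : Sym2 V) then (1:ℕ) else 0)
      = 2 * (cls G c i).card := by
    rw [Finset.sum_congr rfl (fun e _ => by
      obtain ⟨u, w, huw, hrep⟩ := exists_endpoints e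
      exact edge_eval huw hrep (fun _ => 1)), Finset.sum_const, smul_eq_mul, mul_comm]
  rw [hL] at hdc
  rw [hdc]
  exact Finset.sum_congr rfl fun v _ => by rw [cls_filter, mul_one]

include hm in
lemma key (hcubic : ∀ v, (G.neighborSet v).ncard = 3)
    (hs2 : ∀ e f : G.edgeSet, e ≠ f → c e = 2 → c f = 2 →
      ∀ g, G.lineGraph.Adj e g → G.lineGraph.Adj g f → False)
    (hs3 : ∀ e f : G.edgeSet, e ≠ f → c e = 3 → c f = 3 →
      ∀ g, G.lineGraph.Adj e g → G.lineGraph.Adj g f → False) :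
    ∀ v : V, cnt G c v 0 = 1 ∧ cnt G c v 1 = 1 ∧ cnt G c v 2 + cnt G c v 3 = 1 := by
  have h2 := class_count_ineq hm hcubic hs2 (Or.inl ⟨rfl, rfl⟩)
  have h3 := class_count_ineq hm hcubic hs3 (Or.inr ⟨rfl, rfl⟩)
  have hswap : ∑ v : V, cnt G c v 3 * cnt G c v 2 = ∑ v : V, cnt G c v 2 * cnt G c v 3 :=
    Finset.sum_congr rfl fun v _ => mul_comm _ _
  rw [hswap] at h3
  have ht0 := two_t (c := c) 0
  have ht1 := two_t (c := c) 1
  have ht2 := two_t (c := c) 2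
  have ht3 := two_t (c := c) 3
  -- global inequality, pointwise comparison
  have hA : ∑ v : V, (4 * cnt G c v 2 + 4 * cnt G c v 3)
      ≤ ∑ v : V, (2 * cnt G c v 0 + 2 * cnt G c v 1 + 4 * (cnt G c v 2 * cnt G c v 3)) := by
    simp only [Finset.sum_add_distrib, ← Finset.mul_sum]
    omega
  have hpoint : ∀ v ∈ Finset.univ,
      (2 * cnt G c v 0 + 2 * cnt G c v 1 + 4 * (cnt G c v 2 * cnt G c v 3))
        ≤ (4 * cnt G c v 2 + 4 * cnt G c v 3) := by
    intro v _
    have hb0 := cnt_le_one hm v 0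
    have hb1 := cnt_le_one hm v 1
    have hb2 := cnt_le_one hm v 2
    have hb3 := cnt_le_one hm v 3
    have hsv := sum_cnt hcubic c v
    rw [Fin.sum_univ_four] at hsv
    interval_cases (cnt G c v 2) <;> interval_cases (cnt G c v 3) <;> omega
  have heq := (Finset.sum_eq_sum_iff_of_le hpoint).mp
    (le_antisymm (Finset.sum_le_sum hpoint) hA)
  intro v
  have hv := heq v (Finset.mem_univ v)
  have hb0 := cnt_le_one hm v 0
  have hb1 := cnt_le_one hm v 1
  have hb2 := cnt_le_one hm v 2
  have hb3 := cnt_le_one hm v 3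
  have hsv := sum_cnt hcubic c v
  rw [Fin.sum_univ_four] at hsv
  interval_cases (cnt G c v 2) <;> interval_cases (cnt G c v 3) <;> omega


include hm in
theorem final (hcubic : ∀ v, (G.neighborSet v).ncard = 3)
    (hs2 : ∀ e f : G.edgeSet, e ≠ f → c e = 2 → c f = 2 →
      ∀ g, G.lineGraph.Adj e g → G.lineGraph.Adj g f → False)
    (hs3 : ∀ e f : G.edgeSet, e ≠ f → c e = 3 → c f = 3 →
      ∀ g, G.lineGraph.Adj e g → G.lineGraph.Adj g f → False) :
    G.lineGraph.Colorable 3 ∧ 4 ∣ Fintype.card V := by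
  have hkey := key hm hcubic hs2 hs3
  have hmem1 : ∀ (x : G.edgeSet) (v : V), v ∈ (x : Sym2 V) → 1 ≤ cnt G c v (c x) := by
    intro x v hv
    exact Finset.card_pos.mpr ⟨x, Finset.mem_filter.mpr ⟨mem_incid.mpr hv, rfl⟩⟩
  constructor
  · refine ⟨SimpleGraph.Coloring.mk
      (fun e => if c e = 0 then 0 else if c e = 1 then 1 else 2) ?_⟩
    intro a b hadj hcol
    obtain ⟨hne, v, hva, hvb⟩ := lineGraph_adj_iff_exists.mp hadj
    by_cases hc : c a = c b
    · exact hm a b hne hc hadj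
    · have h23 : ((c a = 2 ∧ c b = 3) ∨ (c a = 3 ∧ c b = 2)) := by
        revert hcol hc
        have : ∀ (p q : Fin 4), ¬ p = q →
            (if p = 0 then (0 : Fin 3) else if p = 1 then 1 else 2)
              = (if q = 0 then 0 else if q = 1 then 1 else 2) →
            ((p = 2 ∧ q = 3) ∨ (p = 3 ∧ q = 2)) := by decide
        intro hc hcol
        exact this _ _ hcol hc
      have hv2 : 1 ≤ cnt G c v 2 ∧ 1 ≤ cnt G c v 3 := by
        rcases h23 with ⟨ha, hb⟩ | ⟨ha, hb⟩
        · exact ⟨ha ▸ hmem1 a v hva, hb ▸ hmem1 b v hvb⟩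
        · exact ⟨hb ▸ hmem1 b v hvb, ha ▸ hmem1 a v hva⟩
      have := (hkey v).2.2
      omega
  · -- divisibility
    have hone : ∀ g : G.edgeSet, (c g = 0 ∨ c g = 1) → ∀ u w : V, u ≠ w →
        (g : Sym2 V) = s(u, w) → cnt G c u 2 + cnt G c w 2 = 1 := by
      intro g hg u w huw hrep
      have hku := hkey u
      have hkw := hkey w
      have hgen : ∀ i : Fin 4, (i = 2 ∨ i = 3) →
          (∀ e f : G.edgeSet, e ≠ f → c e = i → c f = i →
            ∀ g', G.lineGraph.Adj e g' → G.lineGraph.Adj g' f → False) →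
          ¬ (1 ≤ cnt G c u i ∧ 1 ≤ cnt G c w i) := by
        rintro i hi hs ⟨h1, h2⟩
        obtain ⟨e, he⟩ := Finset.card_pos.mp h1
        obtain ⟨f, hf⟩ := Finset.card_pos.mp h2
        rw [Finset.mem_filter, mem_incid] at he hf
        have hgi : ¬ c g = i := by
          rcases hg with h | h <;> rcases hi with rfl | rfl <;> simp [h]
        have hef : e ≠ f := by
          rintro rfl
          have : (e : Sym2 V) = s(u, w) := (Sym2.mem_and_mem_iff huw).mp ⟨he.1, hf.1⟩
          exact hgi ((Subtype.ext (this.trans hrep.symm) : e = g) ▸ he.2)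
        have hge : e ≠ g := fun hh => hgi (hh ▸ he.2)
        have hgf : f ≠ g := fun hh => hgi (hh ▸ hf.2)
        exact hs e f hef he.2 hf.2 g
          (adj_of_shared hge he.1 (by simp [hrep]))
          (adj_of_shared hgf.symm (by simp [hrep]) hf.1)
      have hn2 := hgen 2 (Or.inl rfl) hs2
      have hn3 := hgen 3 (Or.inr rfl) hs3
      omega
    -- double count over class-0/1 edges
    have hdc := double_count (cls G c 0 ∪ cls G c 1) (fun v => cnt G c v 2)
    have hLHS : ∑ e ∈ cls G c 0 ∪ cls G c 1,
        (∑ v : V, if v ∈ (e : Sym2 V) then cnt G c v 2 else 0)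
          = (cls G c 0 ∪ cls G c 1).card := by
      rw [Finset.sum_congr rfl (fun e he => ?_), Finset.sum_const, smul_eq_mul, mul_one]
      obtain ⟨u, w, huw, hrep⟩ := exists_endpoints e
      rw [edge_eval huw hrep (fun v => cnt G c v 2)]
      have hcl : c e = 0 ∨ c e = 1 := by
        rcases Finset.mem_union.mp he with h | h <;> [left; right] <;> simpa [cls] using h
      exact hone e hcl u w huw hrep
    have hdisj : Disjoint (cls G c 0) (cls G c 1) := by
      rw [Finset.disjoint_left]
      intro e h0 h1
      simp only [cls, Finset.mem_filter] at h0 h1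
      exact absurd (h0.2.symm.trans h1.2) (by decide)
    have hfilt : ∀ v : V,
        (((cls G c 0 ∪ cls G c 1)).filter (fun e : G.edgeSet => v ∈ (e : Sym2 V))).card
          = cnt G c v 0 + cnt G c v 1 := by
      intro v
      rw [Finset.filter_union, Finset.card_union_of_disjoint
        (Finset.disjoint_filter_filter hdisj), cls_filter, cls_filter]
    have hRHS : ∑ v : V,
        (((cls G c 0 ∪ cls G c 1)).filter (fun e : G.edgeSet => v ∈ (e : Sym2 V))).card
          * cnt G c v 2 = 4 * (cls G c 2).card := by
      have ht2 := two_t (c := c) 2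
      calc ∑ v : V, (((cls G c 0 ∪ cls G c 1)).filter
              (fun e : G.edgeSet => v ∈ (e : Sym2 V))).card * cnt G c v 2
          = ∑ v : V, 2 * cnt G c v 2 := by
            refine Finset.sum_congr rfl fun v _ => ?_
            rw [hfilt v, (hkey v).1, (hkey v).2.1]
        _ = 2 * ∑ v : V, cnt G c v 2 := by rw [Finset.mul_sum]
        _ = 4 * (cls G c 2).card := by omega
    rw [hLHS, hRHS] at hdc
    have hcard : (cls G c 0 ∪ cls G c 1).card = (cls G c 0).card + (cls G c 1).card :=
      Finset.card_union_of_disjoint hdisj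
    have ht0 := two_t (c := c) 0
    have ht1 := two_t (c := c) 1
    have hn0 : ∑ v : V, cnt G c v 0 = Fintype.card V := by
      rw [Finset.sum_congr rfl (fun v _ => (hkey v).1)]
      simp
    have hn1 : ∑ v : V, cnt G c v 1 = Fintype.card V := by
      rw [Finset.sum_congr rfl (fun v _ => (hkey v).2.1)]
      simp
    refine ⟨(cls G c 2).card, by omega⟩

end withColoring

end PackingAux

/-- Every cubic graph admitting a (1,1,2,2)-packing edge-coloring is 3-edge-colorable and
has order divisible by 4. -/
theorem statement_16 {V : Type*} [Fintype V] (G : SimpleGraph V)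
    (hconn : G.Connected) (hcubic : IsCubicGraph G)
    (h : HasPackingEdgeColoring G [1, 1, 2, 2]) :
    G.lineGraph.Colorable 3 ∧ 4 ∣ Fintype.card V := by
  classical
  obtain ⟨c, hc⟩ := h
  have hm : ∀ e f : G.edgeSet, e ≠ f → c e = c f → ¬ G.lineGraph.Adj e f := by
    intro e f hne hcf hadj
    have h1 := hc e f hne hcf
    rw [SimpleGraph.edist_eq_one_iff_adj.mpr hadj] at h1
    have hg : 1 ≤ [1, 1, 2, 2].get (c e) := by
      have hall : ∀ i : Fin 4, 1 ≤ [1, 1, 2, 2].get i := by decide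
      exact hall (c e)
    have h2 : (1 : ℕ∞) + 1 ≤ ((([1, 1, 2, 2] : List ℕ).get (c e) : ℕ) : ℕ∞) + 1 := by
      gcongr
      exact_mod_cast hg
    have hbad := h2.trans h1
    norm_num at hbad
  have hstrong : ∀ (i : Fin 4), i = 2 ∨ i = 3 → ∀ e f : G.edgeSet, e ≠ f → c e = i →
      c f = i → ∀ g, G.lineGraph.Adj e g → G.lineGraph.Adj g f → False := by
    intro i hi e f hne hce hcf g h1 h2
    have hval : [1, 1, 2, 2].get (c e) = 2 := by
      rcases hi with rfl | rfl <;> rw [hce] <;> rfl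
    have hh := hc e f hne (hce.trans hcf.symm)
    rw [hval] at hh
    have hle : G.lineGraph.edist e f ≤ 2 := by
      refine le_trans (SimpleGraph.edist_triangle (v := g)) ?_
      rw [SimpleGraph.edist_eq_one_iff_adj.mpr h1, SimpleGraph.edist_eq_one_iff_adj.mpr h2]
      norm_num
    have hbad := hh.trans hle
    norm_num at hbad
  exact PackingAux.final hm hcubic (hstrong 2 (Or.inl rfl)) (hstrong 3 (Or.inr rfl))
end
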